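/- arXiv:1711.00703 — 4 statements merged into one kernel-verified Lean document; each statement's English description precedes it below -/
import Mathlib

section
/- Let E be a type and α, β : E → ℝ, and suppose there are constants 0 < m ≤ M such that m ≤ α_e ≤ M and |β_e| ≤ M for all e ∈ E. For each e let M_e be the 3×3 complex matrix M_e = [[−β_e, 0, −α_e], [0, α_e, 0], [−α_e, 0, 0]]. Then there exists a continuous linear operator B on the Hilbert space ℓ²(E; ℂ³) (the ℓ²-direct sum lp (fun e => EuclideanSpace ℂ (Fin 3)) 2) such that (Bx)(e) = M_e · x(e) (matrix–vector multiplication) for all x ∈ ℓ²(E; ℂ³) and e ∈ E; moreover B is self-adjoint and bijective. (Consequently ⟨Bx, y⟩ defines a Krein space inner product on ℓ²(E; ℂ³).) -/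
/-!
A uniformly bounded family of operators acts diagonally on an `ℓ²` direct sum, and the diagonal
operator is self-adjoint, resp. bijective, as soon as every block is, provided the block inverses
are uniformly bounded too. Here `M_e` is Hermitian with entries bounded by `M`, and its inverse
`[[0, 0, -1/α_e], [0, 1/α_e, 0], [-1/α_e, 0, β_e/α_e²]]` has entries bounded by `1/m` and `M/m²`.
-/

open Matrix
open scoped ENNReal

namespace lp

variable {𝕜 ι : Type*} [RCLike 𝕜] {E F : ι → Type*}
  [∀ i, NormedAddCommGroup (E i)] [∀ i, NormedSpace 𝕜 (E i)]
  [∀ i, NormedAddCommGroup (F i)] [∀ i, NormedSpace 𝕜 (F i)]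
  {p : ℝ≥0∞}

lemma memℓp_apply_of_bddAbove {T : ∀ i, E i →L[𝕜] F i}
    (hT : BddAbove (Set.range fun i => ‖T i‖)) (x : lp E p) :
    Memℓp (fun i => T i (x i)) p := by
  obtain ⟨C, hC⟩ := hT
  exact ((lp.memℓp x).norm.const_smul C).mono fun i =>
    (T i).le_of_opNorm_le (hC ⟨i, rfl⟩) (x i)

variable [Fact (1 ≤ p)]

noncomputable def blockDiagonal (T : ∀ i, E i →L[𝕜] F i)
    (hT : BddAbove (Set.range fun i => ‖T i‖)) : lp E p →L[𝕜] lp F p :=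
  LinearMap.mkContinuousOfExistsBound
    { toFun := fun x => ⟨fun i => T i (x i), memℓp_apply_of_bddAbove hT x⟩
      map_add' := fun x y => lp.ext <| funext fun i => map_add (T i) (x i) (y i)
      map_smul' := fun c x => lp.ext <| funext fun i => map_smul (T i) c (x i) } <| by
    obtain ⟨C, hC0, hC⟩ := hT.exists_ge 0
    have hp : p ≠ 0 := (zero_lt_one.trans_le Fact.out).ne'
    have hnorm : ‖(C : 𝕜)‖ = C := by rw [RCLike.norm_ofReal, abs_of_nonneg hC0]
    refine ⟨C, fun x => ?_⟩
    calc _ ≤ ‖(C : 𝕜) • x‖ := lp.norm_mono hp fun i => by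
          rw [lp.coeFn_smul, Pi.smul_apply, norm_smul, hnorm]
          exact (T i).le_of_opNorm_le (hC _ ⟨i, rfl⟩) (x i)
      _ = C * ‖x‖ := by rw [lp.norm_const_smul hp, hnorm]

@[simp]
lemma blockDiagonal_apply (T : ∀ i, E i →L[𝕜] F i) (hT : BddAbove (Set.range fun i => ‖T i‖))
    (x : lp E p) (i : ι) : blockDiagonal T hT x i = T i (x i) := rfl

lemma leftInverse_blockDiagonal {T : ∀ i, E i →L[𝕜] F i} {S : ∀ i, F i →L[𝕜] E i}
    (hT : BddAbove (Set.range fun i => ‖T i‖)) (hS : BddAbove (Set.range fun i => ‖S i‖))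
    (h : ∀ i, Function.LeftInverse (S i) (T i)) :
    Function.LeftInverse (blockDiagonal (p := p) S hS) (blockDiagonal T hT) :=
  fun x => lp.ext <| funext fun i => h i (x i)

lemma bijective_blockDiagonal {T : ∀ i, E i →L[𝕜] F i} {S : ∀ i, F i →L[𝕜] E i}
    (hT : BddAbove (Set.range fun i => ‖T i‖)) (hS : BddAbove (Set.range fun i => ‖S i‖))
    (hST : ∀ i, Function.LeftInverse (S i) (T i))
    (hTS : ∀ i, Function.RightInverse (S i) (T i)) :
    Function.Bijective (blockDiagonal (p := p) T hT) :=
  ⟨(leftInverse_blockDiagonal hT hS hST).injective,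
    (leftInverse_blockDiagonal hS hT hTS).surjective⟩

variable {G : ι → Type*} [∀ i, NormedAddCommGroup (G i)] [∀ i, InnerProductSpace 𝕜 (G i)]
  [∀ i, CompleteSpace (G i)]

lemma isSelfAdjoint_blockDiagonal {T : ∀ i, G i →L[𝕜] G i}
    (hT : BddAbove (Set.range fun i => ‖T i‖)) (hsa : ∀ i, IsSelfAdjoint (T i)) :
    IsSelfAdjoint (blockDiagonal (p := 2) T hT) := by
  rw [ContinuousLinearMap.isSelfAdjoint_iff_isSymmetric]
  intro x y
  simp only [ContinuousLinearMap.coe_coe, lp.inner_eq_tsum, blockDiagonal_apply]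
  exact tsum_congr fun i => (hsa i).isSymmetric (x i) (y i)

end lp

namespace Matrix

variable {ι n 𝕜 : Type*} [Fintype n] [DecidableEq n] [RCLike 𝕜]

section

attribute [local instance] Matrix.normedAddCommGroup Matrix.normedSpace

open Bornology in
lemma bddAbove_range_norm_toEuclideanCLM (A : ι → Matrix n n 𝕜)
    (hA : ∀ i j, BddAbove (Set.range fun k => ‖A k i j‖)) :
    BddAbove (Set.range fun k => ‖toEuclideanCLM (n := n) (𝕜 := 𝕜) (A k)‖) := by
  let L : Matrix n n 𝕜 →L[𝕜] EuclideanSpace 𝕜 n →L[𝕜] EuclideanSpace 𝕜 n :=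
    LinearMap.toContinuousLinearMap (toEuclideanCLM (n := n) (𝕜 := 𝕜)).toAlgEquiv.toLinearMap
  have hbdd : IsBounded (Set.range A) := by
    refine (forall_isBounded_image_eval_iff (X := fun _ : n => n → 𝕜)).1 fun i =>
      forall_isBounded_image_eval_iff.1 fun j => ?_
    obtain ⟨C, hC⟩ := hA i j
    refine isBounded_iff_forall_norm_le.2 ⟨C, ?_⟩
    rintro _ ⟨_, ⟨_, ⟨k, rfl⟩, rfl⟩, rfl⟩
    exact hC ⟨k, rfl⟩
  obtain ⟨C, hC⟩ := isBounded_iff_forall_norm_le.1 (L.lipschitz.isBounded_image hbdd)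
  exact ⟨C, Set.forall_mem_range.2 fun k => hC _ ⟨A k, ⟨k, rfl⟩, rfl⟩⟩

end

lemma leftInverse_toEuclideanCLM {A B : Matrix n n 𝕜} (h : B * A = 1) :
    Function.LeftInverse (toEuclideanCLM (n := n) (𝕜 := 𝕜) B)
      (toEuclideanCLM (n := n) (𝕜 := 𝕜) A) :=
  fun x => by rw [← mul_apply_eq_comp, ← map_mul, h, map_one, one_apply_eq_self]

lemma IsHermitian.isSelfAdjoint_toEuclideanCLM {A : Matrix n n 𝕜} (hA : A.IsHermitian) :
    IsSelfAdjoint (toEuclideanCLM (n := n) (𝕜 := 𝕜) A) :=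
  (isHermitian_iff_isSelfAdjoint.1 hA).map _

end Matrix

def kdvBoundaryMatrix (a b : ℝ) : Matrix (Fin 3) (Fin 3) ℂ :=
  !![(-b : ℂ), 0, (-a : ℂ); 0, (a : ℂ), 0; (-a : ℂ), 0, 0]

noncomputable def kdvBoundaryMatrixInv (a b : ℝ) : Matrix (Fin 3) (Fin 3) ℂ :=
  !![0, 0, -(a : ℂ)⁻¹; 0, (a : ℂ)⁻¹, 0; -(a : ℂ)⁻¹, 0, b / (a : ℂ) ^ 2]

lemma kdvBoundaryMatrix_isHermitian (a b : ℝ) : (kdvBoundaryMatrix a b).IsHermitian := by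
  ext i j
  fin_cases i <;> fin_cases j <;> simp [kdvBoundaryMatrix]

lemma kdvBoundaryMatrix_mul_kdvBoundaryMatrixInv {a : ℝ} (ha : a ≠ 0) (b : ℝ) :
    kdvBoundaryMatrix a b * kdvBoundaryMatrixInv a b = 1 := by
  have ha' : (a : ℂ) ≠ 0 := Complex.ofReal_ne_zero.2 ha
  ext i j
  fin_cases i <;> fin_cases j <;>
    simp [kdvBoundaryMatrix, kdvBoundaryMatrixInv, Matrix.mul_apply, Fin.sum_univ_three, ha']
  field_simp
  ring

lemma kdvBoundaryMatrixInv_mul_kdvBoundaryMatrix {a : ℝ} (ha : a ≠ 0) (b : ℝ) :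
    kdvBoundaryMatrixInv a b * kdvBoundaryMatrix a b = 1 :=
  mul_eq_one_comm.1 (kdvBoundaryMatrix_mul_kdvBoundaryMatrixInv ha b)

section

variable {ι : Type*} {α β : ι → ℝ}

lemma bddAbove_norm_kdvBoundaryMatrix_apply (hα : BddAbove (Set.range fun e => |α e|))
    (hβ : BddAbove (Set.range fun e => |β e|)) (i j : Fin 3) :
    BddAbove (Set.range fun e => ‖kdvBoundaryMatrix (α e) (β e) i j‖) := by
  fin_cases i <;> fin_cases j <;> simp [kdvBoundaryMatrix, hα, hβ] <;>
    exact bddAbove_singleton.mono Set.range_const_subset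

lemma bddAbove_norm_kdvBoundaryMatrixInv_apply {m : ℝ} (hm : 0 < m) (hα : ∀ e, m ≤ |α e|)
    (hβ : BddAbove (Set.range fun e => |β e|)) (i j : Fin 3) :
    BddAbove (Set.range fun e => ‖kdvBoundaryMatrixInv (α e) (β e) i j‖) := by
  have hinv : BddAbove (Set.range fun e => |α e|⁻¹) :=
    ⟨m⁻¹, Set.forall_mem_range.2 fun e => inv_anti₀ hm (hα e)⟩
  obtain ⟨C, hC⟩ := hβ
  have hquot : BddAbove (Set.range fun e => |β e| / α e ^ 2) := by
    refine ⟨C / m ^ 2, Set.forall_mem_range.2 fun e => ?_⟩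
    have hβe : |β e| ≤ C := hC ⟨e, rfl⟩
    rw [← sq_abs (α e)]
    exact div_le_div₀ ((abs_nonneg _).trans hβe) hβe (by positivity)
      (pow_le_pow_left₀ hm.le (hα e) 2)
  fin_cases i <;> fin_cases j <;> simp [kdvBoundaryMatrixInv, hinv, hquot] <;>
    exact bddAbove_singleton.mono Set.range_const_subset

end

theorem exists_krein_gram_operator_general
    (E : Type*) (α β : E → ℝ) (m M : ℝ) (hm : 0 < m)
    (hα : ∀ e, m ≤ α e ∧ α e ≤ M) (hβ : ∀ e, |β e| ≤ M)
    (Mat : E → Matrix (Fin 3) (Fin 3) ℂ)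
    (hMat : ∀ e, Mat e =
      !![(-(β e) : ℂ), 0, (-(α e) : ℂ); 0, ((α e) : ℂ), 0; (-(α e) : ℂ), 0, 0]) :
    ∃ B : (lp (fun _ : E => EuclideanSpace ℂ (Fin 3)) 2) →L[ℂ]
          (lp (fun _ : E => EuclideanSpace ℂ (Fin 3)) 2),
      (∀ (x : lp (fun _ : E => EuclideanSpace ℂ (Fin 3)) 2) (e : E),
        (B x : ∀ _ : E, EuclideanSpace ℂ (Fin 3)) e =
          (EuclideanSpace.equiv (Fin 3) ℂ).symm
            ((Mat e).mulVec (EuclideanSpace.equiv (Fin 3) ℂ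
              ((x : ∀ _ : E, EuclideanSpace ℂ (Fin 3)) e)))) ∧
      IsSelfAdjoint B ∧ Function.Bijective B := by
  obtain rfl : Mat = fun e => kdvBoundaryMatrix (α e) (β e) := funext hMat
  have hα_pos (e : E) : 0 < α e := hm.trans_le (hα e).1
  have hα_abs : BddAbove (Set.range fun e => |α e|) :=
    ⟨M, Set.forall_mem_range.2 fun e => (abs_of_pos (hα_pos e)).trans_le (hα e).2⟩
  have hβ_abs : BddAbove (Set.range fun e => |β e|) := ⟨M, Set.forall_mem_range.2 hβ⟩
  have hT := bddAbove_range_norm_toEuclideanCLM _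
    (bddAbove_norm_kdvBoundaryMatrix_apply hα_abs hβ_abs)
  have hS := bddAbove_range_norm_toEuclideanCLM _
    (bddAbove_norm_kdvBoundaryMatrixInv_apply hm (fun e => (hα e).1.trans (le_abs_self _)) hβ_abs)
  refine ⟨lp.blockDiagonal _ hT, fun x e => rfl,
    lp.isSelfAdjoint_blockDiagonal hT fun e =>
      (kdvBoundaryMatrix_isHermitian _ _).isSelfAdjoint_toEuclideanCLM,
    lp.bijective_blockDiagonal hT hS
      (fun e => leftInverse_toEuclideanCLM
        (kdvBoundaryMatrixInv_mul_kdvBoundaryMatrix (hα_pos e).ne' _))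
      (fun e => leftInverse_toEuclideanCLM
        (kdvBoundaryMatrix_mul_kdvBoundaryMatrixInv (hα_pos e).ne' _))⟩

/-- The boundary matrices `M_e = [[−β_e, 0, −α_e], [0, α_e, 0], [−α_e, 0, 0]]` of the
linearized KdV operator, with `(α_e)` bounded and bounded away from zero and `(β_e)`
bounded, induce a bounded, self-adjoint, bijective block-diagonal operator `B` on the
Hilbert space `ℓ²(E; ℂ³)`; hence `⟨Bx, y⟩` is a Krein space inner product. -/
theorem exists_krein_gram_operator
    (E : Type*) (α β : E → ℝ) (m M : ℝ) (hm : 0 < m) (hmM : m ≤ M)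
    (hα : ∀ e, m ≤ α e ∧ α e ≤ M) (hβ : ∀ e, |β e| ≤ M)
    (Mat : E → Matrix (Fin 3) (Fin 3) ℂ)
    (hMat : ∀ e, Mat e =
      !![(-(β e) : ℂ), 0, (-(α e) : ℂ); 0, ((α e) : ℂ), 0; (-(α e) : ℂ), 0, 0]) :
    ∃ B : (lp (fun _ : E => EuclideanSpace ℂ (Fin 3)) 2) →L[ℂ]
          (lp (fun _ : E => EuclideanSpace ℂ (Fin 3)) 2),
      (∀ (x : lp (fun _ : E => EuclideanSpace ℂ (Fin 3)) 2) (e : E),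
        (B x : ∀ _ : E, EuclideanSpace ℂ (Fin 3)) e =
          (EuclideanSpace.equiv (Fin 3) ℂ).symm
            ((Mat e).mulVec (EuclideanSpace.equiv (Fin 3) ℂ
              ((x : ∀ _ : E, EuclideanSpace ℂ (Fin 3)) e)))) ∧
      IsSelfAdjoint B ∧ Function.Bijective B :=
  exists_krein_gram_operator_general E α β m M hm hα hβ Mat hMat
end

section
/- Let B = [[0, 0, −1], [0, 1, 0], [−1, 0, 0]] and L = [[1, 0, 0], [√2, 1, 0], [1, √2, 1]] be 3×3 real matrices. Then L is invertible and Lᵀ · B · L = B; equivalently, for all x, y ∈ ℝ³ one has ⟨B·(Lx), Ly⟩ = ⟨B·x, y⟩, i.e. L is a Krein-space unitary interface matrix for the linearized KdV equation u_t = u_xxx on two half-lines joined at a vertex (the case α = 1, β = 0), and thus yields a unitary dynamics. -/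
open Matrix

/-- For the linearized KdV equation `u_t = u_xxx` (`α = 1`, `β = 0`) on two half-lines
joined at a vertex, with boundary matrix `B = [[0,0,−1],[0,1,0],[−1,0,0]]`, the interface
matrix `L = [[1,0,0],[√2,1,0],[1,√2,1]]` is invertible and Krein-unitary: `Lᵀ B L = B`,
equivalently `⟨B (Lx), Ly⟩ = ⟨Bx, y⟩` for all `x, y ∈ ℝ³`; hence `L` yields a unitary
dynamics. -/
theorem kdv_two_halflines_krein_unitary :
    let B : Matrix (Fin 3) (Fin 3) ℝ := !![0, 0, -1; 0, 1, 0; -1, 0, 0]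
    let L : Matrix (Fin 3) (Fin 3) ℝ :=
      !![1, 0, 0; Real.sqrt 2, 1, 0; 1, Real.sqrt 2, 1]
    IsUnit L ∧ Lᵀ * B * L = B ∧
      ∀ x y : Fin 3 → ℝ, B.mulVec (L.mulVec x) ⬝ᵥ L.mulVec y = B.mulVec x ⬝ᵥ y := by
  intro B L
  have h2 : Real.sqrt 2 * Real.sqrt 2 = 2 := Real.mul_self_sqrt (by norm_num)
  have hBL : Lᵀ * B * L = B := by
    simp only [B, L]
    ext i j
    fin_cases i <;> fin_cases j <;>
      simp [Matrix.mul_apply, Fin.sum_univ_succ, Matrix.vecHead, Matrix.vecTail] <;> nlinarith [h2]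
  refine ⟨?_, hBL, ?_⟩
  · have hdet : L.det = 1 := by
      simp [L, Matrix.det_fin_three]
    exact isUnit_iff_isUnit_det L |>.mpr (by simp [hdet])
  · intro x y
    calc B.mulVec (L.mulVec x) ⬝ᵥ L.mulVec y
        = ((Lᵀ * B * L).mulVec x) ⬝ᵥ y := by
          rw [dotProduct_mulVec, ← mulVec_transpose, mulVec_mulVec, mulVec_mulVec,
            Matrix.mul_assoc]
      _ = B.mulVec x ⬝ᵥ y := by rw [hBL]
end

section
/- Let ι be a type, and for each i ∈ ι let H_i and K_i be complex Hilbert spaces and let L_i be a densely defined (possibly unbounded) linear operator from H_i to K_i. Let T be the block-diagonal operator from ⊕₂ H_i to ⊕₂ K_i with domain D(T) = { x : x_i ∈ D(L_i) for all i, (L_i x_i)_i ∈ ⊕₂ K_i } and (Tx)_i = L_i x_i (so T is densely defined). Then the Hilbert-space adjoint T* of T is the block-diagonal operator of the adjoints L_i*: D(T*) = { y ∈ ⊕₂ K_i : y_i ∈ D(L_i*) for all i, and (L_i* y_i)_i ∈ ⊕₂ H_i } and (T* y)_i = L_i* y_i for all y ∈ D(T*). -/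
/-!
Both sides are statements about graphs. In terms of graphs the adjoint is the annihilator of the
rotated graph, `(y, z) ∈ G(S†) ↔ ∀ (a, b) ∈ G(S), ⟪b, y⟫ = ⟪a, z⟫`, which needs no density and
commutes with block-diagonal sums in `ℓ²`: testing against `(single a, single b)` gives the
componentwise conditions, and conversely the inner products on `ℓ²` are the sums of the
componentwise ones. Density of `D(T)`, needed to identify `G(T†)` with this annihilator, holds
because `D(T)` contains `single u` for every `u ∈ D(L_i)`.
-/

namespace lp

variable {α : Type*} {E : α → Type*} [∀ i, NormedAddCommGroup (E i)] {p : ENNReal}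

theorem dense_of_single_mem [Fact (1 ≤ p)] [DecidableEq α] (hp : p ≠ ⊤) (S : AddSubgroup (lp E p))
    {D : ∀ i, Set (E i)} (hD : ∀ i, Dense (D i)) (hS : ∀ i, ∀ v ∈ D i, lp.single p i v ∈ S) :
    Dense (S : Set (lp E p)) := by
  have hsingle (i : α) (v : E i) : lp.single p i v ∈ S.topologicalClosure :=
    map_mem_closure (isometry_single i).continuous (hD i v) (hS i)
  intro f
  exact isClosed_closure.mem_of_tendsto (lp.hasSum_single hp f)
    (Filter.Eventually.of_forall fun s => S.topologicalClosure.sum_mem fun i _ => hsingle i (f i))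

section BlockDiag

variable {𝕜 : Type*} [NormedRing 𝕜] {F : α → Type*} [∀ i, NormedAddCommGroup (F i)]
  [∀ i, Module 𝕜 (E i)] [∀ i, Module 𝕜 (F i)] [∀ i, IsBoundedSMul 𝕜 (E i)]
  [∀ i, IsBoundedSMul 𝕜 (F i)]

variable (p) in
def blockDiag (g : ∀ i, Submodule 𝕜 (E i × F i)) : Submodule 𝕜 (lp E p × lp F p) where
  carrier := {x | ∀ i, (x.1 i, x.2 i) ∈ g i}
  add_mem' hx hy i := (g i).add_mem (hx i) (hy i)
  zero_mem' i := (g i).zero_mem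
  smul_mem' c _ hx i := (g i).smul_mem c (hx i)

@[simp]
theorem mem_blockDiag {g : ∀ i, Submodule 𝕜 (E i × F i)} {x : lp E p × lp F p} :
    x ∈ blockDiag p g ↔ ∀ i, (x.1 i, x.2 i) ∈ g i :=
  Iff.rfl

theorem single_mem_blockDiag [DecidableEq α] {g : ∀ i, Submodule 𝕜 (E i × F i)} {i : α}
    {a : E i} {b : F i} (hab : (a, b) ∈ g i) :
    (lp.single p i a, lp.single p i b) ∈ blockDiag p g := by
  intro j
  rcases eq_or_ne j i with rfl | hji
  · simpa only [lp.single_apply_self] using hab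
  · simpa only [lp.single_apply_ne p i _ hji, Prod.mk_zero_zero] using (g j).zero_mem

end BlockDiag

theorem blockDiag_adjoint {𝕜 : Type*} [RCLike 𝕜] {F : α → Type*}
    [∀ i, InnerProductSpace 𝕜 (E i)] [∀ i, NormedAddCommGroup (F i)]
    [∀ i, InnerProductSpace 𝕜 (F i)] (g : ∀ i, Submodule 𝕜 (E i × F i)) :
    (blockDiag 2 g).adjoint = blockDiag 2 fun i => (g i).adjoint := by
  classical
  refine Submodule.ext fun ⟨y, z⟩ => ?_
  simp only [Submodule.mem_adjoint_iff, mem_blockDiag]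
  constructor
  · intro h i a b hab
    simpa only [lp.inner_single_left] using
      h (lp.single 2 i a) (lp.single 2 i b) (single_mem_blockDiag hab)
  · intro h a b hab
    rw [lp.inner_eq_tsum, lp.inner_eq_tsum,
      ← (lp.summable_inner (𝕜 := 𝕜) b y).tsum_sub (lp.summable_inner a z)]
    simp only [fun i => h i (a i) (b i) (hab i), tsum_zero]

end lp

open LinearPMap in
/-- The Hilbert-space adjoint of the block-diagonal densely defined operator `T = ⊕ L_i`
on the `ℓ²`-direct sum of Hilbert spaces, characterized by its graph
`(x, y) ∈ G(T) ↔ ∀ i, (x_i, y_i) ∈ G(L_i)`, is the block-diagonal operator of the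
adjoints: `(y, z) ∈ G(T†) ↔ ∀ i, (y_i, z_i) ∈ G(L_i†)`, i.e.
`D(T†) = { y : y_i ∈ D(L_i†) for all i, (L_i† y_i)_i ∈ ⊕₂ H_i }` and `(T† y)_i = L_i† y_i`. -/
theorem blockDiag_adjoint
    {ι : Type*} (H K : ι → Type*)
    [∀ i, NormedAddCommGroup (H i)] [∀ i, InnerProductSpace ℂ (H i)]
    [∀ i, CompleteSpace (H i)]
    [∀ i, NormedAddCommGroup (K i)] [∀ i, InnerProductSpace ℂ (K i)]
    (L : ∀ i, H i →ₗ.[ℂ] K i)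
    (hL : ∀ i, Dense ((L i).domain : Set (H i)))
    (T : lp H 2 →ₗ.[ℂ] lp K 2)
    (hT : ∀ (x : lp H 2) (y : lp K 2),
      (x, y) ∈ T.graph ↔ ∀ i, (x i, y i) ∈ (L i).graph) :
    ∀ (y : lp K 2) (z : lp H 2),
      (y, z) ∈ T.adjoint.graph ↔ ∀ i, (y i, z i) ∈ (L i).adjoint.graph := by
  classical
  have hgraph : T.graph = lp.blockDiag 2 fun i => (L i).graph := by
    ext ⟨x, y⟩
    exact hT x y
  have hdense : Dense (T.domain : Set (lp H 2)) :=
    lp.dense_of_single_mem ENNReal.ofNat_ne_top T.domain.toAddSubgroup hL fun i u hu =>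
      mem_domain_iff.mpr ⟨_, (hT _ _).mpr (lp.single_mem_blockDiag ((L i).mem_graph ⟨u, hu⟩))⟩
  intro y z
  rw [adjoint_graph_eq_graph_adjoint hdense, hgraph, lp.blockDiag_adjoint, lp.mem_blockDiag]
  simp only [adjoint_graph_eq_graph_adjoint (hL _)]
end

section
/- Let a ∈ ℝ, α, β ∈ ℝ, and let u, v : ℝ → ℂ be three times continuously differentiable functions such that u, u', u'', u''' and v, v', v'', v''' are all square-integrable on (a, ∞), and such that the functions conj(u)·(α v''' + β v') and conj(α u''' + β u')·v are integrable on (a, ∞). Then ∫_a^∞ conj(u(x))·(α·v'''(x) + β·v'(x)) dx + ∫_a^∞ conj(α·u'''(x) + β·u'(x))·v(x) dx = − Φ(u,v)(a), where Φ(u,v)(x) = α·(conj(u(x))·v''(x) − conj(u'(x))·v'(x) + conj(u''(x))·v(x)) + β·conj(u(x))·v(x). (This is the integration-by-parts identity on a semi-infinite edge of a metric graph: the boundary contribution at infinity vanishes.) -/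
/-!
The boundary form `Φ(u, v)` is a primitive of `conj u · A v + conj (A u) · v`, and it is
integrable on `(a, ∞)` because each of its terms pairs two `L²` functions. An integrable function
with integrable derivative on a half-line tends to `0` at infinity, so the fundamental theorem of
calculus on `(a, ∞)` leaves only the boundary term `-Φ(u, v)(a)`.
-/

open MeasureTheory Complex Set
open scoped ComplexConjugate

theorem MeasureTheory.MemLp.integrable_conj_mul {X : Type*} [MeasurableSpace X] {μ : Measure X}
    {f g : X → ℂ} (hf : MemLp f 2 μ) (hg : MemLp g 2 μ) :
    Integrable (fun x => conj (f x) * g x) μ :=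
  hf.star.integrable_mul hg

theorem ContDiff.hasDerivAt_iterate_deriv {E : Type*} [NormedAddCommGroup E] [NormedSpace ℝ E]
    {n k : ℕ} {w : ℝ → E} (hw : ContDiff ℝ n w) (hk : k < n) (x : ℝ) :
    HasDerivAt (deriv^[k] w) (deriv^[k + 1] w x) x := by
  rw [← iteratedDeriv_eq_iterate, ← iteratedDeriv_eq_iterate, iteratedDeriv_succ]
  exact (hw.differentiable_iteratedDeriv k (mod_cast hk) x).hasDerivAt

theorem integral_Ioi_of_hasDerivAt_of_integrableOn {E : Type*} [NormedAddCommGroup E]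
    [NormedSpace ℝ E] [CompleteSpace E] {f f' : ℝ → E} {a : ℝ}
    (hderiv : ∀ x ∈ Ici a, HasDerivAt f (f' x) x) (hf' : IntegrableOn f' (Ioi a))
    (hf : IntegrableOn f (Ioi a)) :
    ∫ x in Ioi a, f' x = -f a := by
  have hlim := tendsto_zero_of_hasDerivAt_of_integrableOn_Ioi
    (fun x hx => hderiv x (mem_Ici_of_Ioi hx)) hf' hf
  rw [integral_Ioi_of_hasDerivAt_of_tendsto' hderiv hf' hlim, zero_sub]

namespace LinearizedKdV

variable (α β : ℝ)

noncomputable def op (w : ℝ → ℂ) (x : ℝ) : ℂ :=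
  α * deriv^[3] w x + β * deriv w x

noncomputable def boundaryForm (u v : ℝ → ℂ) (x : ℝ) : ℂ :=
  α * (conj (u x) * deriv^[2] v x - conj (deriv u x) * deriv v x + conj (deriv^[2] u x) * v x) +
    β * conj (u x) * v x

variable {α β} {u v w : ℝ → ℂ}

theorem memLp_op {p : ENNReal} {μ : Measure ℝ} (h₁ : MemLp (deriv w) p μ)
    (h₃ : MemLp (deriv^[3] w) p μ) : MemLp (op α β w) p μ :=
  (h₃.const_mul _).add (h₁.const_mul _)

theorem hasDerivAt_boundaryForm (hu : ContDiff ℝ 3 u) (hv : ContDiff ℝ 3 v) (x : ℝ) :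
    HasDerivAt (boundaryForm α β u v) (conj (u x) * op α β v x + conj (op α β u x) * v x) x := by
  have hu' : ∀ k < 3, HasDerivAt (fun y => conj (deriv^[k] u y)) (conj (deriv^[k + 1] u x)) x :=
    fun k hk => (hu.hasDerivAt_iterate_deriv (mod_cast hk) x).star
  have hv' : ∀ k < 3, HasDerivAt (deriv^[k] v) (deriv^[k + 1] v x) x :=
    fun k hk => hv.hasDerivAt_iterate_deriv (mod_cast hk) x
  have h := (((((hu' 0 (by norm_num)).mul (hv' 2 (by norm_num))).sub
    ((hu' 1 (by norm_num)).mul (hv' 1 (by norm_num)))).add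
    ((hu' 2 (by norm_num)).mul (hv' 0 (by norm_num)))).const_mul (α : ℂ)).add
    (((hu' 0 (by norm_num)).mul (hv' 0 (by norm_num))).const_mul (β : ℂ))
  refine (h.congr_deriv ?_).congr_of_eventuallyEq (Filter.Eventually.of_forall fun y => ?_)
  · simp only [op, Nat.reduceAdd, Function.iterate_zero, Function.iterate_one, id, map_add, map_mul,
      conj_ofReal]
    ring
  · simp only [boundaryForm, Pi.add_apply, Pi.sub_apply, Pi.mul_apply, Function.iterate_zero,
      Function.iterate_one, id]
    ring

theorem integrable_boundaryForm {μ : Measure ℝ} (hu : ∀ k ≤ 2, MemLp (deriv^[k] u) 2 μ)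
    (hv : ∀ k ≤ 2, MemLp (deriv^[k] v) 2 μ) : Integrable (boundaryForm α β u v) μ := by
  have h : ∀ i ≤ 2, ∀ j ≤ 2, Integrable (fun x => conj (deriv^[i] u x) * deriv^[j] v x) μ :=
    fun i hi j hj => (hu i hi).integrable_conj_mul (hv j hj)
  refine (((((h 0 (by norm_num) 2 le_rfl).sub (h 1 (by norm_num) 1 (by norm_num))).add
    (h 2 le_rfl 0 (by norm_num))).const_mul (α : ℂ)).add
    ((h 0 (by norm_num) 0 (by norm_num)).const_mul (β : ℂ))).congr (ae_of_all _ fun x => ?_)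
  simp only [boundaryForm, Pi.add_apply, Pi.sub_apply, Function.iterate_zero,
    Function.iterate_one, id]
  ring

end LinearizedKdV

open LinearizedKdV in
theorem linearizedKdV_integration_by_parts_halfline_general
    (a : ℝ) (α β : ℝ) (u v : ℝ → ℂ)
    (hu : ContDiff ℝ 3 u) (hv : ContDiff ℝ 3 v)
    (huL2 : ∀ k ≤ 3, MemLp (deriv^[k] u) 2 (volume.restrict (Set.Ioi a)))
    (hvL2 : ∀ k ≤ 3, MemLp (deriv^[k] v) 2 (volume.restrict (Set.Ioi a))) :
    (∫ x in Set.Ioi a, (starRingEnd ℂ) (u x) *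
        ((α : ℂ) * deriv^[3] v x + (β : ℂ) * deriv v x)) +
    (∫ x in Set.Ioi a, (starRingEnd ℂ)
        ((α : ℂ) * deriv^[3] u x + (β : ℂ) * deriv u x) * v x) =
      - ((α : ℂ) * ((starRingEnd ℂ) (u a) * deriv^[2] v a -
          (starRingEnd ℂ) (deriv u a) * deriv v a +
          (starRingEnd ℂ) (deriv^[2] u a) * v a) +
        (β : ℂ) * (starRingEnd ℂ) (u a) * v a) := by
  have hAu : MemLp (op α β u) 2 (volume.restrict (Ioi a)) :=
    memLp_op (huL2 1 (by norm_num)) (huL2 3 le_rfl)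
  have hAv : MemLp (op α β v) 2 (volume.restrict (Ioi a)) :=
    memLp_op (hvL2 1 (by norm_num)) (hvL2 3 le_rfl)
  have h₁ := (huL2 0 (by norm_num)).integrable_conj_mul hAv
  have h₂ := hAu.integrable_conj_mul (hvL2 0 (by norm_num))
  have hΦ : Integrable (boundaryForm α β u v) (volume.restrict (Ioi a)) :=
    integrable_boundaryForm (fun k hk => huL2 k (by omega)) (fun k hk => hvL2 k (by omega))
  exact (integral_add h₁ h₂).symm.trans <| integral_Ioi_of_hasDerivAt_of_integrableOn
    (fun x _ => hasDerivAt_boundaryForm hu hv x) (h₁.add h₂) hΦ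

/-- Integration by parts for the linearized KdV operator `A w = α w''' + β w'` on a
semi-infinite edge `(a, ∞)`: if `u, v` are `C³` with `u, u', u'', u'''` and
`v, v', v'', v'''` square-integrable on `(a, ∞)` and the pairings integrable, then
`⟨u, A v⟩ + ⟨A u, v⟩ = - Φ(u,v)(a)`; the boundary contribution at infinity vanishes. -/
theorem linearizedKdV_integration_by_parts_halfline
    (a : ℝ) (α β : ℝ) (u v : ℝ → ℂ)
    (hu : ContDiff ℝ 3 u) (hv : ContDiff ℝ 3 v)
    (huL2 : ∀ k ≤ 3, MemLp (deriv^[k] u) 2 (volume.restrict (Set.Ioi a)))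
    (hvL2 : ∀ k ≤ 3, MemLp (deriv^[k] v) 2 (volume.restrict (Set.Ioi a)))
    (hint1 : Integrable (fun x => (starRingEnd ℂ) (u x) *
        ((α : ℂ) * deriv^[3] v x + (β : ℂ) * deriv v x)) (volume.restrict (Set.Ioi a)))
    (hint2 : Integrable (fun x => (starRingEnd ℂ)
        ((α : ℂ) * deriv^[3] u x + (β : ℂ) * deriv u x) * v x)
        (volume.restrict (Set.Ioi a))) :
    (∫ x in Set.Ioi a, (starRingEnd ℂ) (u x) *
        ((α : ℂ) * deriv^[3] v x + (β : ℂ) * deriv v x)) +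
    (∫ x in Set.Ioi a, (starRingEnd ℂ)
        ((α : ℂ) * deriv^[3] u x + (β : ℂ) * deriv u x) * v x) =
      - ((α : ℂ) * ((starRingEnd ℂ) (u a) * deriv^[2] v a -
          (starRingEnd ℂ) (deriv u a) * deriv v a +
          (starRingEnd ℂ) (deriv^[2] u a) * v a) +
        (β : ℂ) * (starRingEnd ℂ) (u a) * v a) :=
  linearizedKdV_integration_by_parts_halfline_general a α β u v hu hv huL2 hvL2
end
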